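/- The bump function b is infinitely differentiable: the function b : ℝ → ℝ defined by b(r) = exp(2·exp(−1/|r|)/(|r| − 1)) for 0 < |r| < 1, b(0) = 1, and b(r) = 0 for |r| ≥ 1, is C^∞ on all of ℝ. -/
import Mathlib


open Real

/-- The bump function: b(r) = exp(2·exp(−1/|r|)/(|r| − 1)) for 0 < |r| < 1,
b(0) = 1, and b(r) = 0 for |r| ≥ 1. -/
noncomputable def bump (r : ℝ) : ℝ :=
  if r = 0 then 1
  else if |r| < 1 then Real.exp (2 * Real.exp (-1 / |r|) / (|r| - 1))
  else 0

/-- Auxiliary smooth function used near 0. -/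
noncomputable def bumpW (r : ℝ) : ℝ :=
  expNegInvGlue r / (1 - r) + expNegInvGlue (-r) / (1 + r)

lemma expNegInvGlue_of_pos {x : ℝ} (hx : 0 < x) :
    expNegInvGlue x = Real.exp (-1 / x) := by
  rw [expNegInvGlue, if_neg (not_le.2 hx), neg_div, one_div]

lemma bump_eq_inner {r : ℝ} (hr : |r| < 1) :
    bump r = Real.exp (-2 * bumpW r) := by
  have hm1 : -1 < r := neg_lt_of_abs_lt hr
  have hlt1 : r < 1 := lt_of_abs_lt hr
  rcases lt_trichotomy r 0 with h | h | h
  · have habs : |r| = -r := abs_of_neg h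
    rw [bump, if_neg h.ne, if_pos hr, bumpW,
      expNegInvGlue.zero_of_nonpos h.le, expNegInvGlue_of_pos (by linarith), habs]
    congr 1
    have h1 : (1:ℝ) + r ≠ 0 := by linarith
    have h2 : -r - 1 ≠ 0 := by intro hc; linarith
    field_simp
    ring
  · subst h
    simp [bump, bumpW, expNegInvGlue.zero]
  · have habs : |r| = r := abs_of_pos h
    rw [bump, if_neg h.ne', if_pos hr, bumpW,
      expNegInvGlue.zero_of_nonpos (x := -r) (by linarith),
      expNegInvGlue_of_pos h, habs]
    congr 1
    have h1 : (1:ℝ) - r ≠ 0 := by intro hc; linarith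
    have h2 : r - 1 ≠ 0 := by intro hc; linarith
    field_simp
    ring

/-- Auxiliary smooth function used near |r| = 1. -/
noncomputable def bumpK (r : ℝ) : ℝ :=
  (1 - Real.sqrt (r ^ 2)) * Real.exp (1 / Real.sqrt (r ^ 2)) / 2

lemma bump_eq_outer {r : ℝ} (hr : (1:ℝ)/2 < |r|) :
    bump r = expNegInvGlue (bumpK r) := by
  have hr0 : r ≠ 0 := by intro h; rw [h] at hr; norm_num at hr
  have hsq : Real.sqrt (r ^ 2) = |r| := Real.sqrt_sq_eq_abs r
  by_cases h1 : |r| < 1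
  · have hpos : 0 < |r| := abs_pos.2 hr0
    have hk : 0 < bumpK r := by
      rw [bumpK, hsq]
      have := Real.exp_pos (1 / |r|)
      nlinarith
    rw [bump, if_neg hr0, if_pos h1, expNegInvGlue_of_pos hk, bumpK, hsq]
    congr 1
    have h2 : |r| - 1 ≠ 0 := by intro h; nlinarith
    have h3 : (1:ℝ) - |r| ≠ 0 := by intro h; nlinarith
    have h4 : Real.exp (1 / |r|) ≠ 0 := (Real.exp_pos _).ne'
    have h5 : Real.exp (-1 / |r|) = (Real.exp (1 / |r|))⁻¹ := by
      rw [← Real.exp_neg, neg_div]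
    rw [h5]
    field_simp
    ring
  · rw [bump, if_neg hr0, if_neg h1]
    rw [expNegInvGlue.zero_of_nonpos]
    rw [bumpK, hsq]
    have : (1:ℝ) - |r| ≤ 0 := by linarith [not_lt.1 h1]
    have := Real.exp_pos (1 / |r|)
    nlinarith

/-- The bump function is infinitely differentiable on all of ℝ. -/
theorem bump_contDiff : ContDiff ℝ (⊤ : ℕ∞) bump := by
  rw [contDiff_iff_contDiffAt]
  intro r
  by_cases h : |r| < 1
  · have hopen : IsOpen {x : ℝ | |x| < 1} :=
      isOpen_lt continuous_abs continuous_const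
    have hmem : {x : ℝ | |x| < 1} ∈ nhds r := hopen.mem_nhds h
    have heq : bump =ᶠ[nhds r] fun x => Real.exp (-2 * bumpW x) :=
      Filter.eventuallyEq_of_mem hmem fun x hx => bump_eq_inner hx
    refine ContDiffAt.congr_of_eventuallyEq ?_ heq
    have hm1 : -1 < r := neg_lt_of_abs_lt h
    have hlt1 : r < 1 := lt_of_abs_lt h
    have hW : ContDiffAt ℝ (⊤ : ℕ∞) bumpW r := by
      apply ContDiffAt.add
      · exact (expNegInvGlue.contDiff.contDiffAt).div
          (contDiffAt_const.sub contDiffAt_id)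
          (show (1:ℝ) - id r ≠ 0 by simp only [id_eq]; intro hc; linarith)
      · exact ((expNegInvGlue.contDiff.contDiffAt).comp r contDiffAt_id.neg).div
          (contDiffAt_const.add contDiffAt_id)
          (show (1:ℝ) + id r ≠ 0 by simp only [id_eq]; intro hc; linarith)
    exact ContDiffAt.exp (contDiffAt_const.mul hW)
  · have h2 : (1:ℝ)/2 < |r| := by
      have := not_lt.1 h; linarith
    have hopen : IsOpen {x : ℝ | (1:ℝ)/2 < |x|} :=
      isOpen_lt continuous_const continuous_abs
    have hmem : {x : ℝ | (1:ℝ)/2 < |x|} ∈ nhds r := hopen.mem_nhds h2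
    have heq : bump =ᶠ[nhds r] fun x => expNegInvGlue (bumpK x) :=
      Filter.eventuallyEq_of_mem hmem fun x hx => bump_eq_outer hx
    refine ContDiffAt.congr_of_eventuallyEq ?_ heq
    have hr0 : r ≠ 0 := by intro hc; rw [hc] at h2; norm_num at h2
    have hsq : ContDiffAt ℝ (⊤ : ℕ∞) (fun x : ℝ => Real.sqrt (x ^ 2)) r := by
      have : ContDiffAt ℝ (⊤ : ℕ∞) Real.sqrt (r ^ 2) :=
        Real.contDiffAt_sqrt (by positivity)
      have h2' : ContDiffAt ℝ (⊤ : ℕ∞) (fun x : ℝ => x ^ 2) r := contDiffAt_id.pow 2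
      exact ContDiffAt.comp (g := Real.sqrt) (f := fun x : ℝ => x ^ 2) r this h2' 
    have hsqne : Real.sqrt (r ^ 2) ≠ 0 := by
      rw [Real.sqrt_sq_eq_abs]; exact abs_ne_zero.2 hr0
    have hK : ContDiffAt ℝ (⊤ : ℕ∞) bumpK r := by
      apply ContDiffAt.div_const
      exact (contDiffAt_const.sub hsq).mul
        ((Real.contDiff_exp.contDiffAt).comp r (contDiffAt_const.div hsq hsqne))
    exact (expNegInvGlue.contDiff.contDiffAt).comp r hK
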